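/- Let θ = (θ_g, X_g)_{g∈G} be a topological partial action of a topological group G on a compact Hausdorff space X, with enveloping space X_G = (G × X)/R, and let 2^θ be the induced partial action on the hyperspace 2^X, with enveloping space (2^X)_G = (G × 2^X)/2^R. Then X_G is Hausdorff if and only if (2^X)_G is Hausdorff. -/

import Mathlib

/-- The hyperspace `2^X` of nonempty compact subsets of `X`. -/
structure NCompact (X : Type*) [TopologicalSpace X] where
  carrier : Set X
  isCompact' : IsCompact carrier
  nonempty' : carrier.Nonempty

/-- The Vietoris topology on the hyperspace `2^X`, generated by the subbasic open sets
`{A | A ⊆ U}` and `{A | A ∩ U ≠ ∅}` for `U` open in `X`. -/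
instance NCompact.instTopologicalSpace (X : Type*) [TopologicalSpace X] :
    TopologicalSpace (NCompact X) :=
  TopologicalSpace.generateFrom
    {S | ∃ U : Set X, IsOpen U ∧
      (S = {A : NCompact X | A.carrier ⊆ U} ∨ S = {A : NCompact X | (A.carrier ∩ U).Nonempty})}

/-- A topological partial action `θ = (θ_g, X_g)_{g ∈ G}` of a topological group `G` on a
topological space `X`: a family of open sets `dom g = X_g` and maps `map g = θ_g` which
restrict to homeomorphisms `θ_g : X_{g⁻¹} → X_g` (with inverse `θ_{g⁻¹}`), such that
`X_1 = X`, `θ_1 = id`, `θ_g(X_{g⁻¹} ∩ X_h) = X_g ∩ X_{gh}` and `θ_g ∘ θ_h = θ_{gh}` on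
`X_{h⁻¹} ∩ X_{(gh)⁻¹}`.  (The values of `map g` outside `dom g⁻¹` are irrelevant junk.) -/
structure TopPartialAction (G : Type*) (X : Type*) [Group G] [TopologicalSpace G]
    [TopologicalSpace X] where
  dom : G → Set X
  map : G → X → X
  isOpen_dom : ∀ g, IsOpen (dom g)
  dom_one : dom 1 = Set.univ
  map_one : ∀ x, map 1 x = x
  image_dom : ∀ g, map g '' dom g⁻¹ = dom g
  map_inv : ∀ g, ∀ x ∈ dom g⁻¹, map g⁻¹ (map g x) = x
  image_inter : ∀ g h, map g '' (dom g⁻¹ ∩ dom h) = dom g ∩ dom (g * h)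
  map_mul : ∀ g h, ∀ x ∈ dom h⁻¹ ∩ dom (g * h)⁻¹, map g (map h x) = map (g * h) x
  continuousOn_map : ∀ g, ContinuousOn (map g) (dom g⁻¹)

variable {G X : Type*} [Group G] [TopologicalSpace G] [TopologicalSpace X]

/-- The equivalence relation `R` on `G × X` defining the enveloping space `X_G = (G × X)/R`:
`(g,x) R (h,y)` iff `x ∈ X_{g⁻¹h}` and `θ_{h⁻¹g}(x) = y`. -/
def envRel (θ : TopPartialAction G X) (p q : G × X) : Prop :=
  p.2 ∈ θ.dom (p.1⁻¹ * q.1) ∧ θ.map (q.1⁻¹ * p.1) p.2 = q.2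

/-- The relation `2^R` on `G × 2^X` defining the enveloping space `(2^X)_G` of the induced
partial action `2^θ`: `(g,A) 2^R (h,B)` iff `A ⊆ X_{g⁻¹h}` and `θ_{h⁻¹g}(A) = B`. -/
def envRelH (θ : TopPartialAction G X) (p q : G × NCompact X) : Prop :=
  p.2.carrier ⊆ θ.dom (p.1⁻¹ * q.1) ∧ θ.map (q.1⁻¹ * p.1) '' p.2.carrier = q.2.carrier

/-!
Both enveloping spaces are quotients by equivalence relations whose quotient maps are open: the
saturation of an open set is a union of its preimages under the partial homeomorphisms
`(h, y) ↦ (h k, θ_{k⁻¹} y)`. Hence each is Hausdorff exactly when its relation is closed, that is,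
when the graph `{(k, x, θ_k x)}` of the partial action is closed. The graph of `2^θ` is the lift
of the graph of `θ` to compact sets: `θ_k(A) = B` iff every point of `A` is sent into `B` and
every point of `B` is hit. Restricting to singletons shows that the lifted graph is closed only
if the graph of `θ` is; conversely, the tube lemma applied to the compact sets `A` and `B`
shows that the lift of a closed relation is closed.
-/

open Set Topology

namespace NCompact

variable {W Y : Type*} [TopologicalSpace W] [TopologicalSpace Y]

theorem carrier_injective : Function.Injective (carrier : NCompact X → Set X) := by
  rintro ⟨A, -, -⟩ ⟨B, -, -⟩ rfl
  rfl

theorem isOpen_setOf_subset {U : Set X} (hU : IsOpen U) :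
    IsOpen {A : NCompact X | A.carrier ⊆ U} :=
  TopologicalSpace.isOpen_generateFrom_of_mem ⟨U, hU, .inl rfl⟩

theorem isOpen_setOf_inter_nonempty {U : Set X} (hU : IsOpen U) :
    IsOpen {A : NCompact X | (A.carrier ∩ U).Nonempty} :=
  TopologicalSpace.isOpen_generateFrom_of_mem ⟨U, hU, .inr rfl⟩

def singleton (x : X) : NCompact X := ⟨{x}, isCompact_singleton, singleton_nonempty x⟩

theorem continuous_singleton : Continuous (singleton : X → NCompact X) := by
  refine continuous_generateFrom_iff.2 ?_
  rintro S ⟨U, hU, rfl | rfl⟩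
  · simpa [singleton] using hU
  · simpa [singleton] using hU

/-- The image `f '' A`, with the junk value `A` when `f '' A` is not compact. -/
noncomputable def image (f : X → X) (A : NCompact X) : NCompact X :=
  open Classical in
  if h : IsCompact (f '' A.carrier) then ⟨f '' A.carrier, h, A.nonempty'.image f⟩ else A

theorem carrier_image {f : X → X} {A : NCompact X} (h : IsCompact (f '' A.carrier)) :
    (A.image f).carrier = f '' A.carrier := by
  rw [image, dif_pos h]

theorem continuousOn_image {f : X → X} {D : Set X} (hD : IsOpen D) (hf : ContinuousOn f D) :
    ContinuousOn (image f) {A : NCompact X | A.carrier ⊆ D} := by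
  have carrier_image_of_subset : ∀ A : NCompact X, A.carrier ⊆ D →
      (A.image f).carrier = f '' A.carrier := fun A hA =>
    carrier_image (A.isCompact'.image_of_continuousOn (hf.mono hA))
  refine continuousOn_iff_continuous_domRestrict.2 (continuous_generateFrom_iff.2 ?_)
  rintro S ⟨U, hU, rfl | rfl⟩
  · convert (isOpen_setOf_subset (hf.isOpen_inter_preimage hD hU)).preimage
      continuous_subtype_val using 1
    ext ⟨A, hA⟩
    simp only [mem_preimage, mem_ofPred_eq, domRestrict_apply, carrier_image_of_subset A hA,
      image_subset_iff, subset_inter_iff]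
    exact (and_iff_right hA).symm
  · convert (isOpen_setOf_inter_nonempty (hf.isOpen_inter_preimage hD hU)).preimage
      continuous_subtype_val using 1
    ext ⟨A, hA⟩
    simp only [mem_preimage, mem_ofPred_eq, domRestrict_apply, carrier_image_of_subset A hA,
      image_inter_nonempty_iff, ← inter_assoc, inter_eq_left.2 hA]

theorem isClosed_setOf_forall_exists {Γ : Set (W × X × Y)} (hΓ : IsClosed Γ) :
    IsClosed {p : W × NCompact X × NCompact Y |
      ∀ a ∈ p.2.1.carrier, ∃ b ∈ p.2.2.carrier, (p.1, a, b) ∈ Γ} := by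
  rw [← isOpen_compl_iff, isOpen_iff_forall_mem_open]
  rintro ⟨w, A, B⟩ hp
  obtain ⟨a, ha, hB⟩ : ∃ a ∈ A.carrier, ∀ b ∈ B.carrier, (w, a, b) ∉ Γ := by simpa using hp
  have hn : IsOpen {z : (W × X) × Y | (z.1.1, z.1.2, z.2) ∉ Γ} :=
    hΓ.isOpen_compl.preimage (by fun_prop)
  -- a neighbourhood of `(w, a)` that is `Γ`-unrelated to a neighbourhood of the compact set `B`
  obtain ⟨u, v, hu, hv, hwa, hBv, huv⟩ :=
    generalized_tube_lemma (isCompact_singleton (x := (w, a))) B.isCompact' hn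
      (by rintro ⟨_, b⟩ ⟨rfl, hb⟩; exact hB b hb)
  obtain ⟨W₀, V₀, hW₀, hV₀, hw, haV, hWV⟩ := isOpen_prod_iff.1 hu w a (hwa rfl)
  refine ⟨W₀ ×ˢ {A' : NCompact X | (A'.carrier ∩ V₀).Nonempty} ×ˢ
      {B' : NCompact Y | B'.carrier ⊆ v}, ?_,
    hW₀.prod ((isOpen_setOf_inter_nonempty hV₀).prod (isOpen_setOf_subset hv)),
    ⟨hw, ⟨a, ha, haV⟩, hBv⟩⟩
  rintro ⟨w', A', B'⟩ ⟨hw', ⟨a', ha', ha'V⟩, hB'v⟩ hall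
  obtain ⟨b, hb, hΓb⟩ := hall a' ha'
  exact huv (mk_mem_prod (hWV (mk_mem_prod hw' ha'V)) (hB'v hb)) hΓb

def liftRel (Γ : Set (W × X × Y)) : Set (W × NCompact X × NCompact Y) :=
  {p | (∀ a ∈ p.2.1.carrier, ∃ b ∈ p.2.2.carrier, (p.1, a, b) ∈ Γ) ∧
    ∀ b ∈ p.2.2.carrier, ∃ a ∈ p.2.1.carrier, (p.1, a, b) ∈ Γ}

theorem isClosed_liftRel_iff {Γ : Set (W × X × Y)} : IsClosed (liftRel Γ) ↔ IsClosed Γ := by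
  constructor
  · intro h
    have hpre :
        (fun t : W × X × Y => (t.1, singleton t.2.1, singleton t.2.2)) ⁻¹' liftRel Γ = Γ := by
      ext ⟨w, x, y⟩
      simp [liftRel, singleton]
    exact hpre ▸ h.preimage (continuous_fst.prodMk ((continuous_singleton.comp
      continuous_snd.fst).prodMk (continuous_singleton.comp continuous_snd.snd)))
  · intro hΓ
    have hΓ' : IsClosed ((fun t : W × Y × X => (t.1, t.2.2, t.2.1)) ⁻¹' Γ) :=
      hΓ.preimage (by fun_prop)
    exact (isClosed_setOf_forall_exists hΓ).inter
      ((isClosed_setOf_forall_exists hΓ').preimage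
        (f := fun p : W × NCompact X × NCompact Y => (p.1, p.2.2, p.2.1)) (by fun_prop))

end NCompact

namespace TopPartialAction

variable (θ : TopPartialAction G X)

theorem mapsTo (g : G) : MapsTo (θ.map g) (θ.dom g⁻¹) (θ.dom g) := fun _ hx =>
  θ.image_dom g ▸ mem_image_of_mem _ hx

theorem leftInvOn (g : G) : LeftInvOn (θ.map g⁻¹) (θ.map g) (θ.dom g⁻¹) :=
  θ.map_inv g

theorem leftInvOn_inv (g : G) : LeftInvOn (θ.map g) (θ.map g⁻¹) (θ.dom g) := fun x hx => by
  simpa using θ.map_inv g⁻¹ x (by rwa [inv_inv])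

variable {θ}

theorem map_map {g h : G} {x : X} (hx : x ∈ θ.dom h⁻¹) (hhx : θ.map h x ∈ θ.dom g⁻¹) :
    x ∈ θ.dom (g * h)⁻¹ ∧ θ.map g (θ.map h x) = θ.map (g * h) x := by
  have hmem : θ.map h x ∈ θ.map h '' (θ.dom h⁻¹ ∩ θ.dom (g * h)⁻¹) := by
    rw [θ.image_inter, mul_inv_rev, mul_inv_cancel_left]
    exact ⟨θ.mapsTo h hx, hhx⟩
  obtain ⟨x', ⟨hx'h, hx'gh⟩, hx'x⟩ := hmem
  obtain rfl := (θ.leftInvOn h).injOn hx'h hx hx'x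
  exact ⟨hx'gh, θ.map_mul g h x' ⟨hx'h, hx'gh⟩⟩

variable (θ)

theorem envRel_mk {g h : G} {x y : X} :
    envRel θ (g, x) (h, y) ↔ x ∈ θ.dom (g⁻¹ * h) ∧ θ.map (h⁻¹ * g) x = y :=
  Iff.rfl

theorem envRel_equivalence : Equivalence (envRel θ) where
  refl p := by simp [envRel, θ.dom_one, θ.map_one]
  symm := by
    rintro ⟨g, x⟩ ⟨h, y⟩
    simp only [envRel_mk]
    rintro ⟨hx, rfl⟩
    have hk : (h⁻¹ * g)⁻¹ = g⁻¹ * h := by group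
    rw [← hk] at hx ⊢
    exact ⟨θ.mapsTo _ hx, θ.map_inv _ x hx⟩
  trans := by
    rintro ⟨g, x⟩ ⟨h, y⟩ ⟨l, z⟩
    simp only [envRel_mk]
    rintro ⟨hx, rfl⟩ ⟨hy, rfl⟩
    rw [show g⁻¹ * h = (h⁻¹ * g)⁻¹ by group] at hx
    rw [show h⁻¹ * l = (l⁻¹ * h)⁻¹ by group] at hy
    have hcomp := map_map hx hy
    rw [show l⁻¹ * h * (h⁻¹ * g) = l⁻¹ * g by group] at hcomp
    exact ⟨by simpa using hcomp.1, hcomp.2.symm⟩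

theorem mk_eq_mk_iff {p q : G × X} : Quot.mk (envRel θ) p = Quot.mk _ q ↔ envRel θ p q :=
  Quot.eq.trans θ.envRel_equivalence.eqvGen_iff

theorem envRel_iff_exists {p q : G × X} :
    envRel θ p q ↔ ∃ k, q.2 ∈ θ.dom k ∧ p = (q.1 * k, θ.map k⁻¹ q.2) := by
  obtain ⟨g, x⟩ := p
  obtain ⟨h, y⟩ := q
  simp only [envRel_mk]
  constructor
  · rintro ⟨hx, rfl⟩
    rw [show g⁻¹ * h = (h⁻¹ * g)⁻¹ by group] at hx
    exact ⟨h⁻¹ * g, θ.mapsTo _ hx, by rw [mul_inv_cancel_left, θ.map_inv _ x hx]⟩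
  · rintro ⟨k, hy, hp⟩
    simp only [Prod.mk.injEq] at hp
    obtain ⟨rfl, rfl⟩ := hp
    rw [show (h * k)⁻¹ * h = k⁻¹ by group, inv_mul_cancel_left]
    exact ⟨θ.mapsTo k⁻¹ (by rwa [inv_inv]), θ.leftInvOn_inv k hy⟩

def graph : Set (G × X × X) :=
  {t | t.2.1 ∈ θ.dom t.1⁻¹ ∧ θ.map t.1 t.2.1 = t.2.2}

theorem carrier_image_map {g : G} {A : NCompact X} (hA : A.carrier ⊆ θ.dom g⁻¹) :
    (A.image (θ.map g)).carrier = θ.map g '' A.carrier :=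
  NCompact.carrier_image (A.isCompact'.image_of_continuousOn ((θ.continuousOn_map g).mono hA))

theorem image_setOf_subset {g : G} {S : Set X} (hS : S ⊆ θ.dom g⁻¹) :
    NCompact.image (θ.map g) '' {A | A.carrier ⊆ S} = {B | B.carrier ⊆ θ.map g '' S} := by
  ext B
  constructor
  · rintro ⟨A, hA, rfl⟩
    rw [mem_ofPred_eq, θ.carrier_image_map (hA.trans hS)]
    exact image_mono hA
  · intro hB
    have hBg : B.carrier ⊆ θ.dom g := hB.trans ((θ.mapsTo g).mono_left hS).image_subset
    have hcarrier := θ.carrier_image_map (g := g⁻¹) (A := B) (by rwa [inv_inv])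
    have hBS : (B.image (θ.map g⁻¹)).carrier ⊆ S := by
      rw [hcarrier, ← (θ.leftInvOn g).image_image' hS]
      exact image_mono hB
    refine ⟨B.image (θ.map g⁻¹), hBS, NCompact.carrier_injective ?_⟩
    rw [θ.carrier_image_map (hBS.trans hS), hcarrier, (θ.leftInvOn_inv g).image_image' hBg]

/-- The induced partial action `2^θ`. -/
noncomputable def hyperspace : TopPartialAction G (NCompact X) where
  dom g := {A | A.carrier ⊆ θ.dom g}
  map g := NCompact.image (θ.map g)
  isOpen_dom g := NCompact.isOpen_setOf_subset (θ.isOpen_dom g)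
  dom_one := by simp [θ.dom_one]
  map_one A := NCompact.carrier_injective <| by
    rw [θ.carrier_image_map (by simp [θ.dom_one])]
    simp [θ.map_one]
  image_dom g := by
    rw [θ.image_setOf_subset subset_rfl, θ.image_dom]
  map_inv g A hA := NCompact.carrier_injective <| by
    have hgA : θ.map g '' A.carrier ⊆ θ.dom g⁻¹⁻¹ := by
      rw [inv_inv]
      exact ((θ.mapsTo g).mono_left hA).image_subset
    rw [θ.carrier_image_map (by rwa [θ.carrier_image_map hA]), θ.carrier_image_map hA,
      (θ.leftInvOn g).image_image' hA]
  image_inter g h := by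
    simp only [← ofPred_and, ← subset_inter_iff]
    rw [θ.image_setOf_subset inter_subset_left, θ.image_inter]
  map_mul g h A hA := NCompact.carrier_injective <| by
    have himage : θ.map g '' (θ.map h '' A.carrier) = θ.map (g * h) '' A.carrier := by
      rw [image_image]
      exact image_congr fun a ha => θ.map_mul g h a ⟨hA.1 ha, hA.2 ha⟩
    have hcompact : IsCompact (θ.map g '' (A.image (θ.map h)).carrier) := by
      rw [θ.carrier_image_map hA.1, himage, ← θ.carrier_image_map hA.2]
      exact NCompact.isCompact' _
    rw [NCompact.carrier_image hcompact, θ.carrier_image_map hA.1, himage,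
      θ.carrier_image_map hA.2]
  continuousOn_map g := NCompact.continuousOn_image (θ.isOpen_dom _) (θ.continuousOn_map g)

theorem envRelH_eq_envRel_hyperspace : envRelH θ = envRel θ.hyperspace := by
  ext ⟨g, A⟩ ⟨h, B⟩
  simp only [envRelH, envRel_mk]
  refine and_congr_right fun hA => ?_
  change _ ↔ A.image _ = B
  rw [← NCompact.carrier_injective.eq_iff, θ.carrier_image_map (by simpa using hA)]

theorem graph_hyperspace : θ.hyperspace.graph = NCompact.liftRel θ.graph := by
  ext ⟨k, A, B⟩
  change (A.carrier ⊆ θ.dom k⁻¹ ∧ A.image (θ.map k) = B) ↔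
    (∀ a ∈ A.carrier, ∃ b ∈ B.carrier, a ∈ θ.dom k⁻¹ ∧ θ.map k a = b) ∧
      ∀ b ∈ B.carrier, ∃ a ∈ A.carrier, a ∈ θ.dom k⁻¹ ∧ θ.map k a = b
  constructor
  · rintro ⟨hA, hAB⟩
    rw [← NCompact.carrier_injective.eq_iff, θ.carrier_image_map hA] at hAB
    rw [← hAB]
    exact ⟨fun a ha => ⟨_, mem_image_of_mem _ ha, hA ha, rfl⟩,
      fun _ ⟨a, ha, hab⟩ => ⟨a, ha, hA ha, hab⟩⟩
  · rintro ⟨hAB, hBA⟩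
    have hA : A.carrier ⊆ θ.dom k⁻¹ := fun a ha => (hAB a ha).choose_spec.2.1
    refine ⟨hA, NCompact.carrier_injective ?_⟩
    rw [θ.carrier_image_map hA]
    ext b
    constructor
    · rintro ⟨a, ha, rfl⟩
      obtain ⟨b, hb, -, rfl⟩ := hAB a ha
      exact hb
    · intro hb
      obtain ⟨a, ha, -, rfl⟩ := hBA b hb
      exact ⟨a, ha, rfl⟩

variable [IsTopologicalGroup G]

theorem isOpenMap_mk : IsOpenMap (Quot.mk (envRel θ)) := by
  intro U hU
  rw [← isQuotientMap_quot_mk.isOpen_preimage]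
  have hsat : Quot.mk (envRel θ) ⁻¹' (Quot.mk _ '' U) =
      ⋃ k, (univ ×ˢ θ.dom k) ∩ (fun q : G × X => (q.1 * k, θ.map k⁻¹ q.2)) ⁻¹' U := by
    ext q
    simp [θ.mk_eq_mk_iff, θ.envRel_iff_exists, and_comm]
  rw [hsat]
  refine isOpen_iUnion fun k => ContinuousOn.isOpen_inter_preimage ?_
    (isOpen_univ.prod (θ.isOpen_dom k)) hU
  refine (continuous_fst.mul continuous_const).continuousOn.prodMk ?_
  exact (inv_inv k ▸ θ.continuousOn_map k⁻¹).comp continuous_snd.continuousOn fun q hq => hq.2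

theorem isClosed_setOf_envRel_iff :
    IsClosed {pq : (G × X) × (G × X) | envRel θ pq.1 pq.2} ↔ IsClosed θ.graph := by
  constructor
  · intro h
    have hpre : (fun t : G × X × X => ((t.1, t.2.1), ((1 : G), t.2.2))) ⁻¹'
        {pq : (G × X) × (G × X) | envRel θ pq.1 pq.2} = θ.graph := by
      ext ⟨k, x, y⟩
      simp [graph, envRel]
    exact hpre ▸ h.preimage (by fun_prop)
  · intro h
    have hpre :
        (fun pq : (G × X) × (G × X) => (pq.2.1⁻¹ * pq.1.1, pq.1.2, pq.2.2)) ⁻¹' θ.graph =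
        {pq : (G × X) × (G × X) | envRel θ pq.1 pq.2} := by
      ext ⟨⟨g, x⟩, ⟨h, y⟩⟩
      simp [graph, envRel]
    exact hpre ▸ h.preimage (by fun_prop)

theorem t2Space_quot_envRel_iff : T2Space (Quot (envRel θ)) ↔ IsClosed θ.graph := by
  rw [t2Space_iff_of_isOpenQuotientMap ⟨Quot.mk_surjective, continuous_quot_mk, θ.isOpenMap_mk⟩]
  simp only [θ.mk_eq_mk_iff]
  exact θ.isClosed_setOf_envRel_iff

end TopPartialAction

theorem t2_envelopingSpace_iff_t2_hyperspace_general
    {G X : Type*} [Group G] [TopologicalSpace G] [IsTopologicalGroup G]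
    [TopologicalSpace X]
    (θ : TopPartialAction G X) :
    T2Space (Quot (envRel θ)) ↔ T2Space (Quot (envRelH θ)) := by
  rw [θ.envRelH_eq_envRel_hyperspace, θ.t2Space_quot_envRel_iff,
    θ.hyperspace.t2Space_quot_envRel_iff, θ.graph_hyperspace, NCompact.isClosed_liftRel_iff]

/-- Let `θ` be a topological partial action of a topological group `G` on a compact Hausdorff
space `X`, with enveloping space `X_G = (G × X)/R`, and let `2^θ` be the induced partial
action on the hyperspace `2^X`, with enveloping space `(2^X)_G = (G × 2^X)/2^R`.  Then
`X_G` is Hausdorff if and only if `(2^X)_G` is Hausdorff. -/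
theorem t2_envelopingSpace_iff_t2_hyperspace
    {G X : Type*} [Group G] [TopologicalSpace G] [IsTopologicalGroup G]
    [TopologicalSpace X] [CompactSpace X] [T2Space X]
    (θ : TopPartialAction G X) :
    T2Space (Quot (envRel θ)) ↔ T2Space (Quot (envRelH θ)) :=
  t2_envelopingSpace_iff_t2_hyperspace_general θ
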